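/- Let G be the niche graph of a bipartite tournament D with bipartition (U,V), and suppose G[U] is disconnected. Then every connected component of G (of both G[U] and G[V]) is a complete graph. -/

import Mathlib

structure BipTournament (α : Type*) where
  U : Set α
  V : Set α
  A : α → α → Prop
  disj : Disjoint U V
  cover : U ∪ V = Set.univ
  orient : ∀ u ∈ U, ∀ v ∈ V, Xor' (A u v) (A v u)
  arcs : ∀ x y, A x y → (x ∈ U ∧ y ∈ V) ∨ (x ∈ V ∧ y ∈ U)

def BipTournament.outN {α : Type*} (D : BipTournament α) (x : α) : Set α := {y | D.A x y}

def BipTournament.inN {α : Type*} (D : BipTournament α) (x : α) : Set α := {y | D.A y x}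

def BipTournament.niche {α : Type*} (D : BipTournament α) : SimpleGraph α where
  Adj x y := x ≠ y ∧ ((∃ w, D.A x w ∧ D.A y w) ∨ (∃ w, D.A w x ∧ D.A w y))
  symm := ⟨by
    rintro x y ⟨h, h'⟩
    exact ⟨h.symm, h'.imp (fun ⟨w, a, b⟩ => ⟨w, b, a⟩) (fun ⟨w, a, b⟩ => ⟨w, b, a⟩)⟩⟩
  loopless := ⟨fun x h => h.1 rfl⟩

/-!
Take `u, u' ∈ U` in different components of the niche graph. Two vertices of `U` whose arcs to
some `t ∈ V` point the same way share `t` as a common out- or in-neighbour; hence every vertex of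
`U` reachable from `u` is oriented towards `V` exactly like `u`, and every other one exactly
opposite. Labelling the component of `u` by `0`, `N⁺(u)` by `1`, the rest of `U` by `2` and
`N⁻(u)` by `3` in `ZMod 4`, every arc raises the label by one: `D` is a blow-up of the directed
4-cycle. In such a digraph without isolated vertices two vertices share an out- or in-neighbour
exactly when they carry the same label, so the components of the niche graph are the label
classes, each of them a clique.
-/

theorem SimpleGraph.Reachable.apply_eq {V β : Type*} {G : SimpleGraph V} {f : V → β}
    (hf : ∀ x y, G.Adj x y → f x = f y) {x y : V} (h : G.Reachable x y) : f x = f y := by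
  obtain ⟨p⟩ := h
  induction p with
  | nil => rfl
  | cons hadj _ ih => exact (hf _ _ hadj).trans ih

namespace BipTournament

variable {α : Type*} (D : BipTournament α)

theorem mem_V_iff_notMem_U (x : α) : x ∈ D.V ↔ x ∉ D.U := by
  have hx : x ∈ D.U ∪ D.V := D.cover ▸ Set.mem_univ x
  exact ⟨fun hv hu => Set.disjoint_left.mp D.disj hu hv, hx.resolve_left⟩

variable {D}

theorem arc_iff_not_arc {u v : α} (hu : u ∈ D.U) (hv : v ∈ D.V) : D.A v u ↔ ¬ D.A u v :=
  (xor_iff_not_iff'.1 (D.orient u hu v hv)).symm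

theorem mem_U_iff_notMem_U_of_arc {x y : α} (h : D.A x y) : x ∈ D.U ↔ y ∉ D.U := by
  rcases D.arcs x y h with ⟨hx, hy⟩ | ⟨hx, hy⟩ <;> rw [mem_V_iff_notMem_U] at * <;> tauto

theorem mem_U_iff_of_niche_adj {x y : α} (h : D.niche.Adj x y) : x ∈ D.U ↔ y ∈ D.U := by
  rcases h.2 with ⟨w, hx, hy⟩ | ⟨w, hx, hy⟩
  · rw [mem_U_iff_notMem_U_of_arc hx, mem_U_iff_notMem_U_of_arc hy]
  · have := mem_U_iff_notMem_U_of_arc hx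
    have := mem_U_iff_notMem_U_of_arc hy
    tauto

theorem exists_arc (hU : D.U.Nonempty) (hV : D.V.Nonempty) (x : α) : ∃ w, D.A x w ∨ D.A w x := by
  by_cases hx : x ∈ D.U
  · obtain ⟨v, hv⟩ := hV
    exact ⟨v, Xor.or (D.orient x hx v hv)⟩
  · obtain ⟨u, hu⟩ := hU
    exact ⟨u, (Xor.or (D.orient u hu x ((D.mem_V_iff_notMem_U x).2 hx))).symm⟩

theorem niche_adj_iff_of_arc_iff {G : Type*} [Add G] [IsRightCancelAdd G] (f : α → G) (c : G)
    (hf : ∀ x y, D.A x y ↔ f y = f x + c) (hD : ∀ x, ∃ w, D.A x w ∨ D.A w x) {x y : α} :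
    D.niche.Adj x y ↔ x ≠ y ∧ f x = f y := by
  refine ⟨fun h => ⟨h.1, ?_⟩, fun ⟨hne, hxy⟩ => ⟨hne, ?_⟩⟩
  · rcases h.2 with ⟨w, hx, hy⟩ | ⟨w, hx, hy⟩
    · rw [hf] at hx hy
      exact add_right_cancel (hx.symm.trans hy)
    · rw [hf] at hx hy
      exact hx.trans hy.symm
  · obtain ⟨w, hw | hw⟩ := hD x
    · exact .inl ⟨w, hw, by rw [hf] at hw ⊢; rw [hw, hxy]⟩
    · exact .inr ⟨w, hw, by rw [hf] at hw ⊢; rw [← hw, hxy]⟩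

theorem arc_iff_of_forall_mem_U_mem_V (f : α → ZMod 4) (hfU : ∀ u ∈ D.U, f u = 0 ∨ f u = 2)
    (hfV : ∀ v ∈ D.V, f v = 1 ∨ f v = 3) (h : ∀ u ∈ D.U, ∀ v ∈ D.V, D.A u v ↔ f v = f u + 1)
    (x y : α) : D.A x y ↔ f y = f x + 1 := by
  by_cases hx : x ∈ D.U <;> by_cases hy : y ∈ D.U
  · have hA : ¬ D.A x y := fun hxy => (mem_U_iff_notMem_U_of_arc hxy).1 hx hy
    rcases hfU x hx with hfx | hfx <;> rcases hfU y hy with hfy | hfy <;>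
      simp only [hA, hfx, hfy, false_iff] <;> decide
  · exact h x hx y ((D.mem_V_iff_notMem_U y).2 hy)
  · have hxV := (D.mem_V_iff_notMem_U x).2 hx
    rw [arc_iff_not_arc hy hxV, h y hy x hxV]
    rcases hfV x hxV with hfx | hfx <;> rcases hfU y hy with hfy | hfy <;>
      simp only [hfx, hfy] <;> decide
  · have hA : ¬ D.A x y := fun hxy => hx ((mem_U_iff_notMem_U_of_arc hxy).2 hy)
    rw [← D.mem_V_iff_notMem_U] at hx hy
    rcases hfV x hx with hfx | hfx <;> rcases hfV y hy with hfy | hfy <;>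
      simp only [hA, hfx, hfy, false_iff] <;> decide

theorem niche_reachable_of_arc_iff {x y t : α} (hx : x ∈ D.U) (hy : y ∈ D.U) (ht : t ∈ D.V)
    (h : D.A x t ↔ D.A y t) : D.niche.Reachable x y := by
  rcases eq_or_ne x y with rfl | hne
  · rfl
  refine SimpleGraph.Adj.reachable ⟨hne, ?_⟩
  by_cases hxt : D.A x t
  · exact .inl ⟨t, hxt, h.1 hxt⟩
  · exact .inr ⟨t, (arc_iff_not_arc hx ht).2 hxt, (arc_iff_not_arc hy ht).2 (mt h.2 hxt)⟩

theorem arc_iff_not_arc_of_not_reachable {x y t : α} (hx : x ∈ D.U) (hy : y ∈ D.U)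
    (ht : t ∈ D.V) (h : ¬ D.niche.Reachable x y) : D.A x t ↔ ¬ D.A y t := by
  by_contra hne
  exact h (niche_reachable_of_arc_iff hx hy ht (by tauto))

theorem arc_iff_arc_of_reachable {u u' x t : α} (hu : u ∈ D.U) (hu' : u' ∈ D.U)
    (hnr : ¬ D.niche.Reachable u u') (hx : x ∈ D.U) (hr : D.niche.Reachable u x) (ht : t ∈ D.V) :
    D.A x t ↔ D.A u t := by
  rw [arc_iff_not_arc_of_not_reachable hu hu' ht hnr,
    arc_iff_not_arc_of_not_reachable hx hu' ht fun h => hnr (hr.trans h)]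

theorem exists_arc_iff_zmod_four {u u' : α} (hu : u ∈ D.U) (hu' : u' ∈ D.U)
    (hnr : ¬ D.niche.Reachable u u') : ∃ f : α → ZMod 4, ∀ x y, D.A x y ↔ f y = f x + 1 := by
  classical
  refine ⟨fun x => if x ∈ D.U then (if D.niche.Reachable u x then 0 else 2)
    else (if D.A u x then 1 else 3), arc_iff_of_forall_mem_U_mem_V _ ?_ ?_ ?_⟩
  · intro x hx
    simp only [hx, if_true]
    split_ifs <;> simp
  · intro v hv
    simp only [(D.mem_V_iff_notMem_U v).1 hv, if_false]
    split_ifs <;> simp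
  · intro x hx v hv
    simp only [hx, (D.mem_V_iff_notMem_U v).1 hv, if_true, if_false]
    by_cases hr : D.niche.Reachable u x
    · rw [if_pos hr, arc_iff_arc_of_reachable hu hu' hnr hx hr hv]
      split_ifs with huv <;> simp only [huv, true_iff, false_iff] <;> decide
    · rw [if_neg hr, arc_iff_not_arc_of_not_reachable hx hu hv fun h => hr h.symm]
      split_ifs with huv <;> simp only [huv, not_true, not_false_iff, true_iff, false_iff] <;>
        decide

theorem exists_not_reachable_of_not_connected (hU : D.U.Nonempty)
    (h : ¬ (D.niche.induce D.U).Connected) :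
    ∃ u ∈ D.U, ∃ u' ∈ D.U, ¬ D.niche.Reachable u u' := by
  classical
  by_contra! hreach
  refine h ((SimpleGraph.connected_iff _).2 ⟨?_, hU.to_subtype⟩)
  rintro ⟨u, hu⟩ ⟨u', hu'⟩
  obtain ⟨p⟩ := hreach u hu u' hu'
  refine ⟨p.induce D.U fun x hx => ?_⟩
  have hside := (p.takeUntil x hx).reachable.apply_eq (f := (· ∈ D.U))
    fun _ _ hadj => propext (mem_U_iff_of_niche_adj hadj)
  exact hside ▸ hu

end BipTournament

theorem stmt15 {α : Type*} (D : BipTournament α) (hU : D.U.Nonempty) (hV : D.V.Nonempty)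
    (h : ¬ (D.niche.induce D.U).Connected) :
    ∀ x y : α, D.niche.Reachable x y → x ≠ y → D.niche.Adj x y := by
  obtain ⟨u, hu, u', hu', hnr⟩ := D.exists_not_reachable_of_not_connected hU h
  obtain ⟨f, hf⟩ := D.exists_arc_iff_zmod_four hu hu' hnr
  have hadj {x y : α} : D.niche.Adj x y ↔ x ≠ y ∧ f x = f y :=
    D.niche_adj_iff_of_arc_iff f 1 hf (D.exists_arc hU hV)
  intro x y hr hxy
  exact hadj.2 ⟨hxy, hr.apply_eq fun _ _ hab => (hadj.1 hab).2⟩
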